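/- For the rendered color I = ∑_i w_i c_i with weights w_i = T_i(1-exp(-σ_i δ_i)) and colors c_i ∈ [0,1], the rendered value satisfies 0 ≤ I ≤ 1 - exp(-∑_i σ_i δ_i) ≤ 1. -/
import Mathlib


open Finset

/-- For the rendered color `I = ∑_i w_i c_i` with volume-rendering weights
`w_i = T_i(1-exp(-σ_i δ_i))`, `T_i = exp(-∑_{j<i} σ_j δ_j)`, and colors
`c_i ∈ [0,1]`, one has `0 ≤ I ≤ 1 - exp(-∑_i σ_i δ_i) ≤ 1`. -/
theorem rendered_color_bounds (n : ℕ) (σ δ c : ℕ → ℝ)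
    (hσ : ∀ i, 0 ≤ σ i) (hδ : ∀ i, 0 ≤ δ i)
    (hc0 : ∀ i, 0 ≤ c i) (hc1 : ∀ i, c i ≤ 1) :
    let I : ℝ := ∑ i ∈ range n,
      Real.exp (-∑ j ∈ range i, σ j * δ j) * (1 - Real.exp (-(σ i * δ i))) * c i
    0 ≤ I ∧ I ≤ 1 - Real.exp (-∑ i ∈ range n, σ i * δ i) ∧
      1 - Real.exp (-∑ i ∈ range n, σ i * δ i) ≤ 1 := by
  intro I
  have hw : ∀ i, 0 ≤ Real.exp (-∑ j ∈ range i, σ j * δ j) * (1 - Real.exp (-(σ i * δ i))) := by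
    intro i
    apply mul_nonneg (Real.exp_pos _).le
    have : Real.exp (-(σ i * δ i)) ≤ 1 := by
      rw [Real.exp_le_one_iff]
      have := mul_nonneg (hσ i) (hδ i); linarith
    linarith
  have hterm : ∀ i ∈ range n,
      0 ≤ Real.exp (-∑ j ∈ range i, σ j * δ j) * (1 - Real.exp (-(σ i * δ i))) * c i :=
    fun i _ => mul_nonneg (hw i) (hc0 i)
  have hsum : ∑ i ∈ range n,
      Real.exp (-∑ j ∈ range i, σ j * δ j) * (1 - Real.exp (-(σ i * δ i)))
      = 1 - Real.exp (-∑ i ∈ range n, σ i * δ i) := by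
    have := Finset.sum_range_sub' (f := fun i => Real.exp (-∑ j ∈ range i, σ j * δ j)) n
    simp only [Finset.range_zero, Finset.sum_empty, neg_zero, Real.exp_zero] at this
    rw [← this]
    apply Finset.sum_congr rfl
    intro i _
    rw [Finset.sum_range_succ, neg_add, Real.exp_add, mul_sub, mul_one]
  refine ⟨Finset.sum_nonneg hterm, ?_, ?_⟩
  · rw [← hsum]
    apply Finset.sum_le_sum
    intro i _
    calc Real.exp (-∑ j ∈ range i, σ j * δ j) * (1 - Real.exp (-(σ i * δ i))) * c i
        ≤ Real.exp (-∑ j ∈ range i, σ j * δ j) * (1 - Real.exp (-(σ i * δ i))) * 1 :=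
          mul_le_mul_of_nonneg_left (hc1 i) (hw i)
      _ = _ := mul_one _
  · have : 0 ≤ Real.exp (-∑ i ∈ range n, σ i * δ i) := (Real.exp_pos _).le
    linarith
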